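/- Let S and A be nonempty finite sets, H a positive integer, P_h : S × A → PMF(S) transition distributions and r_h : S × A → ℝ rewards for h ∈ {1,…,H}. Let π⋆ = (π⋆_h) and π = (π_h) be stochastic policies with π⋆_h(·|s), π_h(·|s) ∈ PMF(A), and let V^{π⋆} be the value functions of π⋆, defined by V^{π⋆}_{H+1} = 0, Q^{π⋆}_h = r_h + P_h V^{π⋆}_{h+1}, V^{π⋆}_h(s) = Σ_a π⋆_h(a|s) Q^{π⋆}_h(s,a), where (P_h V)(s,a) = Σ_{s'} P_h(s,a)(s') V(s'). Let Q_h : S × A → ℝ be arbitrary, define V_h(s) = Σ_a π_h(a|s) Q_h(s,a) with V_{H+1} = 0, and Γ_h = r_h + P_h V_{h+1} − Q_h. Denote by E_{π⋆}[· | s_1 = s] the expectation along the trajectory (s_1, a_1, …, s_H, a_H) generated from s_1 = s by a_h ∼ π⋆_h(·|s_h), s_{h+1} ∼ P_h(s_h, a_h). Then V^{π⋆}_1(s) − V_1(s) = Σ_{h=1}^H E_{π⋆}[ Γ_h(s_h, a_h) | s_1 = s ] + Σ_{h=1}^H E_{π⋆}[ Σ_{a ∈ A} Q_h(s_h, a)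 ( π⋆_h(a|s_h) − π_h(a|s_h) ) | s_1 = s ]. -/

import Mathlib

open Finset

/-- The distribution of the state `s_{k+1}` after `k` transitions, starting from
`s₁`, when actions are drawn from the stochastic policy `π` and states evolve
according to the transition probabilities `P` (probability mass functions on the
finite sets are represented as nonnegative functions summing to one). -/
noncomputable def stateDistPol {S A : Type*} [Fintype S] [Fintype A] [DecidableEq S]
    (P : ℕ → S → A → S → ℝ) (π : ℕ → S → A → ℝ) (s₁ : S) : ℕ → S → ℝ
  | 0 => fun s => if s = s₁ then 1 else 0
  | k + 1 => fun s => ∑ s' : S, ∑ a : A,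
      stateDistPol P π s₁ k s' * π (k + 1) s' a * P (k + 1) s' a s


private lemma tele_aux (f : ℕ → ℝ) : ∀ n : ℕ, 1 ≤ n →
    ∑ x ∈ Finset.Icc 1 n, (f x - f (x + 1)) = f 1 - f (n + 1) := by
  intro n hn
  induction n with
  | zero => omega
  | succ m ih =>
    rcases Nat.eq_zero_or_pos m with hm | hm
    · subst hm; simp
    · rw [Finset.sum_Icc_succ_top (by omega), ih hm]; ring

/-- Expected regret decomposition: for the value functions
`(Q^{π⋆}, V^{π⋆})` of a policy `π⋆` (characterized by the Bellman equations), any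
Q-estimates `Q_h` with `V_h(s) = ⟨Q_h(s,·), π_h(·|s)⟩`, `V_{H+1} = 0`, and
temporal-difference errors `Γ_h = r_h + P_h V_{h+1} − Q_h`,
`V^{π⋆}_1(s) − V_1(s) = Σ_h E_{π⋆}[Γ_h(s_h,a_h) | s_1 = s]
  + Σ_h E_{π⋆}[⟨Q_h(s_h,·), π⋆_h(·|s_h) − π_h(·|s_h)⟩ | s_1 = s]`,
the expectations being written via the state occupancy `stateDistPol` of `π⋆`. -/
theorem expected_regret_decomposition
    {S A : Type*} [Fintype S] [Fintype A] [Nonempty S] [Nonempty A] [DecidableEq S]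
    (H : ℕ) (hH : 1 ≤ H)
    (P : ℕ → S → A → S → ℝ)
    (hP : ∀ h ∈ Finset.Icc 1 H, ∀ s a,
      (∀ s', 0 ≤ P h s a s') ∧ ∑ s', P h s a s' = 1)
    (r : ℕ → S → A → ℝ)
    (πstar π : ℕ → S → A → ℝ)
    (hπstar : ∀ h ∈ Finset.Icc 1 H, ∀ s, (∀ a, 0 ≤ πstar h s a) ∧ ∑ a, πstar h s a = 1)
    (hπ : ∀ h ∈ Finset.Icc 1 H, ∀ s, (∀ a, 0 ≤ π h s a) ∧ ∑ a, π h s a = 1)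
    (Qstar : ℕ → S → A → ℝ) (Vstar : ℕ → S → ℝ)
    (hVstartop : Vstar (H + 1) = 0)
    (hQstar : ∀ h ∈ Finset.Icc 1 H, ∀ s a,
      Qstar h s a = r h s a + ∑ s', P h s a s' * Vstar (h + 1) s')
    (hVstar : ∀ h ∈ Finset.Icc 1 H, ∀ s,
      Vstar h s = ∑ a, πstar h s a * Qstar h s a)
    (Q : ℕ → S → A → ℝ) (V : ℕ → S → ℝ)
    (hVtop : V (H + 1) = 0)
    (hV : ∀ h ∈ Finset.Icc 1 H, ∀ s, V h s = ∑ a, π h s a * Q h s a)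
    (s₀ : S) :
    Vstar 1 s₀ - V 1 s₀
      = (∑ h ∈ Finset.Icc 1 H, ∑ s' : S, stateDistPol P πstar s₀ (h - 1) s'
            * ∑ a, πstar h s' a
                * (r h s' a + (∑ s'' : S, P h s' a s'' * V (h + 1) s'') - Q h s' a))
        + ∑ h ∈ Finset.Icc 1 H, ∑ s' : S, stateDistPol P πstar s₀ (h - 1) s'
            * ∑ a, Q h s' a * (πstar h s' a - π h s' a) := by
  classical
  set d := stateDistPol P πstar s₀ with hd
  set G : ℕ → ℝ := fun h => ∑ s : S, d (h - 1) s * (Vstar h s - V h s) with hG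
  have step : ∀ h ∈ Finset.Icc 1 H,
      G h
        = ((∑ s' : S, d (h - 1) s'
              * ∑ a, πstar h s' a
                  * (r h s' a + (∑ s'' : S, P h s' a s'' * V (h + 1) s'') - Q h s' a))
          + ∑ s' : S, d (h - 1) s'
              * ∑ a, Q h s' a * (πstar h s' a - π h s' a)) + G (h + 1) := by
    intro h hh
    obtain ⟨h1, hH'⟩ := Finset.mem_Icc.mp hh
    obtain ⟨k, rfl⟩ : ∃ k, h = k + 1 := ⟨h - 1, (Nat.succ_pred_eq_of_pos h1).symm⟩
    have hk : (k + 1) - 1 = k := rfl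
    have hk2 : (k + 1 + 1) - 1 = k + 1 := rfl
    simp only [hG, hk, hk2]
    have hdsucc : ∀ s'' : S, d (k + 1) s''
        = ∑ s' : S, ∑ a : A, d k s' * πstar (k + 1) s' a * P (k + 1) s' a s'' := by
      intro s''; rw [hd]; rfl
    calc ∑ s : S, d k s * (Vstar (k + 1) s - V (k + 1) s)
        = ∑ s : S, (d k s * ∑ a, πstar (k + 1) s a
              * (r (k + 1) s a + (∑ s'' : S, P (k + 1) s a s'' * V (k + 1 + 1) s'') - Q (k + 1) s a)
            + d k s * ∑ a, Q (k + 1) s a * (πstar (k + 1) s a - π (k + 1) s a)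
            + ∑ a, ∑ s'' : S, d k s * πstar (k + 1) s a * P (k + 1) s a s''
                * (Vstar (k + 1 + 1) s'' - V (k + 1 + 1) s'')) := by
          refine Finset.sum_congr rfl fun s _ => ?_
          rw [hVstar _ hh s, hV _ hh s]
          have inner : ∀ a : A, ∑ s'' : S, d k s * πstar (k + 1) s a * P (k + 1) s a s''
                * (Vstar (k + 1 + 1) s'' - V (k + 1 + 1) s'')
              = d k s * πstar (k + 1) s a * ((∑ s'' : S, P (k+1) s a s'' * Vstar (k+1+1) s'')
                - (∑ s'' : S, P (k+1) s a s'' * V (k+1+1) s'')) := by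
            intro a
            conv_rhs => rw [mul_sub, Finset.mul_sum, Finset.mul_sum]
            rw [← Finset.sum_sub_distrib]
            exact Finset.sum_congr rfl fun s'' _ => by ring
          conv_lhs => rw [mul_sub, Finset.mul_sum, Finset.mul_sum]
          conv_rhs => rw [Finset.mul_sum, Finset.mul_sum]
          rw [← Finset.sum_add_distrib, ← Finset.sum_add_distrib, ← Finset.sum_sub_distrib]
          refine Finset.sum_congr rfl fun a _ => ?_
          rw [hQstar _ hh s a, inner a]
          ring
      _ = (∑ s' : S, d k s'
              * ∑ a, πstar (k+1) s' a
                  * (r (k+1) s' a + (∑ s'' : S, P (k+1) s' a s'' * V (k + 1 + 1) s'') - Q (k+1) s' a))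
          + (∑ s' : S, d k s'
              * ∑ a, Q (k+1) s' a * (πstar (k+1) s' a - π (k+1) s' a))
          + ∑ s'' : S, d (k + 1) s'' * (Vstar (k + 1 + 1) s'' - V (k + 1 + 1) s'') := by
          rw [Finset.sum_add_distrib, Finset.sum_add_distrib]
          congr 1
          have hrhs : ∀ s'' : S, d (k + 1) s'' * (Vstar (k + 1 + 1) s'' - V (k + 1 + 1) s'')
              = ∑ s' : S, ∑ a : A, d k s' * πstar (k + 1) s' a * P (k + 1) s' a s''
                  * (Vstar (k + 1 + 1) s'' - V (k + 1 + 1) s'') := by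
            intro s''
            rw [hdsucc s'', Finset.sum_mul]
            exact Finset.sum_congr rfl fun s' _ => Finset.sum_mul _ _ _
          rw [Finset.sum_congr rfl fun s'' _ => hrhs s'']
          calc ∑ s : S, ∑ a : A, ∑ s'' : S, d k s * πstar (k + 1) s a * P (k + 1) s a s''
                  * (Vstar (k + 1 + 1) s'' - V (k + 1 + 1) s'')
              = ∑ s : S, ∑ s'' : S, ∑ a : A, d k s * πstar (k + 1) s a * P (k + 1) s a s''
                  * (Vstar (k + 1 + 1) s'' - V (k + 1 + 1) s'') :=
                Finset.sum_congr rfl fun s _ => Finset.sum_comm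
            _ = _ := Finset.sum_comm
  have step' : ∀ h ∈ Finset.Icc 1 H,
      ((∑ s' : S, d (h - 1) s'
            * ∑ a, πstar h s' a
                * (r h s' a + (∑ s'' : S, P h s' a s'' * V (h + 1) s'') - Q h s' a))
        + ∑ s' : S, d (h - 1) s'
            * ∑ a, Q h s' a * (πstar h s' a - π h s' a)) = G h - G (h + 1) := by
    intro h hh
    have := step h hh
    linarith
  have tele : ∑ h ∈ Finset.Icc 1 H,
      (((∑ s' : S, d (h - 1) s'
            * ∑ a, πstar h s' a
                * (r h s' a + (∑ s'' : S, P h s' a s'' * V (h + 1) s'') - Q h s' a))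
        + ∑ s' : S, d (h - 1) s'
            * ∑ a, Q h s' a * (πstar h s' a - π h s' a)))
      = G 1 - G (H + 1) := by
    rw [Finset.sum_congr rfl step']
    exact tele_aux G H hH
  have hG1 : G 1 = Vstar 1 s₀ - V 1 s₀ := by
    simp only [hG, hd]
    show ∑ s : S, (if s = s₀ then (1:ℝ) else 0) * (Vstar 1 s - V 1 s) = _
    simp
  have hGtop : G (H + 1) = 0 := by
    simp [hG, hVstartop, hVtop]
  rw [← Finset.sum_add_distrib, tele, hG1, hGtop, sub_zero]
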